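/- arXiv:1006.0529 — 2 statements merged into one kernel-verified Lean document; each statement's English description precedes it below -/
import Mathlib

section
/- Let p = (p_1, …, p_N) and q = (q_1, …, q_N) be configurations of N points in Euclidean space E^D such that q is an expansion of p, and let r_1, …, r_N ≥ 0. If for some indices i, j, l the balls satisfy B_D(q_i, r_i) ∩ B_D(q_j, r_j) ∩ B_D(q_l, r_l) ≠ ∅, then also B_D(p_i, r_i) ∩ B_D(p_j, r_j) ∩ B_D(p_l, r_l) ≠ ∅. In other words, under an expansion of the centers no new triple intersections of the balls can appear. -/
/-!
The finite step of Kirszbraun's theorem does the work: if `|p_k - p_m| ≤ |q_k - q_m|` for all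
`k, m` in a finite set, every point `x` has a partner `y` with `|y - p_k| ≤ |x - q_k|` for all `k`;
a common point `x` of the three `q`-balls then yields a common point `y` of the `p`-balls.

To find `y`, minimise `max_k (|y - p_k|² - |x - q_k|²)`. At a minimiser, `y` lies in the convex
hull of the centres `p_k` of the active terms, since otherwise moving `y` towards that hull
decreases every active term. Writing `y = ∑ w_k p_k` over active `k`, the variance identity
turns `∑ w_k w_m |p_k - p_m|² ≤ ∑ w_k w_m |q_k - q_m|²` into `2 · min ≤ -2 |∑ w_k (q_k - x)|²`,
so the minimum is `≤ 0`.
-/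

open Metric Filter Topology RealInnerProductSpace

section

variable {ι E F : Type*} [NormedAddCommGroup E] [InnerProductSpace ℝ E]
  [NormedAddCommGroup F] [InnerProductSpace ℝ F]

lemma sum_sum_mul_norm_sub_sq (t : Finset ι) (w : ι → ℝ) (a : ι → E) (c : E)
    (hw : ∑ m ∈ t, w m = 1) :
    ∑ m ∈ t, ∑ n ∈ t, w m * w n * ‖a m - a n‖ ^ 2
      = 2 * ∑ m ∈ t, w m * ‖a m - c‖ ^ 2 - 2 * ‖∑ m ∈ t, w m • (a m - c)‖ ^ 2 := by
  have expand : ∀ m n, w m * w n * ‖a m - a n‖ ^ 2 =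
      w m * ‖a m - c‖ ^ 2 * w n + w m * (w n * ‖a n - c‖ ^ 2)
        - 2 * ⟪w m • (a m - c), w n • (a n - c)⟫ := by
    intro m n
    rw [show a m - a n = (a m - c) - (a n - c) by abel, norm_sub_sq_real,
      real_inner_smul_left, real_inner_smul_right]
    ring
  simp_rw [expand, Finset.sum_sub_distrib, Finset.sum_add_distrib, ← Finset.mul_sum,
    ← Finset.sum_mul, ← inner_sum, ← sum_inner, real_inner_self_eq_norm_sq, hw]
  ring

lemma nonpos_of_sum_smul_eq_of_dist_sq_eq_add (t : Finset ι) (w : ι → ℝ) (P : ι → E)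
    (Q : ι → F) (x : F) (y : E) (c : ℝ) (hw₀ : ∀ m ∈ t, 0 ≤ w m) (hw₁ : ∑ m ∈ t, w m = 1)
    (hy : ∑ m ∈ t, w m • P m = y)
    (hPQ : ∀ m ∈ t, ∀ n ∈ t, dist (P m) (P n) ≤ dist (Q m) (Q n))
    (hc : ∀ m ∈ t, dist y (P m) ^ 2 = c + dist x (Q m) ^ 2) : c ≤ 0 := by
  have hP := sum_sum_mul_norm_sub_sq t w P y hw₁
  have hQ := sum_sum_mul_norm_sub_sq t w Q x hw₁
  have hy₀ : ∑ m ∈ t, w m • (P m - y) = 0 := by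
    simp only [smul_sub, Finset.sum_sub_distrib, hy, ← Finset.sum_smul, hw₁, one_smul, sub_self]
  have hPc : ∑ m ∈ t, w m * ‖P m - y‖ ^ 2 = c + ∑ m ∈ t, w m * ‖Q m - x‖ ^ 2 := by
    calc ∑ m ∈ t, w m * ‖P m - y‖ ^ 2 = ∑ m ∈ t, (w m * c + w m * ‖Q m - x‖ ^ 2) := by
          refine Finset.sum_congr rfl fun m hm => ?_
          rw [← dist_eq_norm, ← dist_eq_norm, dist_comm, dist_comm (Q m), hc m hm]
          ring
      _ = c + ∑ m ∈ t, w m * ‖Q m - x‖ ^ 2 := by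
          rw [Finset.sum_add_distrib, ← Finset.sum_mul, hw₁, one_mul]
  have hle : ∑ m ∈ t, ∑ n ∈ t, w m * w n * ‖P m - P n‖ ^ 2
      ≤ ∑ m ∈ t, ∑ n ∈ t, w m * w n * ‖Q m - Q n‖ ^ 2 := by
    gcongr with m hm n hn
    · exact mul_nonneg (hw₀ m hm) (hw₀ n hn)
    · simpa only [dist_eq_norm] using hPQ m hm n hn
  rw [hP, hQ, hy₀, norm_zero, hPc] at hle
  nlinarith [norm_nonneg (∑ m ∈ t, w m • (Q m - x))]

lemma exists_inner_sub_pos_of_notMem {C : Set E} (hC : Convex ℝ C) (hCc : IsComplete C)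
    (hne : C.Nonempty) {y : E} (hy : y ∉ C) : ∃ v : E, ∀ z ∈ C, 0 < ⟪z - y, v⟫ := by
  obtain ⟨z₀, hz₀C, hz₀⟩ := exists_norm_eq_iInf_of_complete_convex hne hCc hC y
  rw [norm_eq_iInf_iff_real_inner_le_zero hC hz₀C] at hz₀
  have hv : 0 < ‖z₀ - y‖ := norm_pos_iff.2 (sub_ne_zero.2 fun h => hy (h ▸ hz₀C))
  refine ⟨z₀ - y, fun z hz => ?_⟩
  have hsplit : ⟪z - y, z₀ - y⟫ = ‖z₀ - y‖ ^ 2 - ⟪y - z₀, z - z₀⟫ := by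
    rw [← real_inner_self_eq_norm_sq]
    simp only [inner_sub_left, inner_sub_right]
    rw [real_inner_comm y z₀, real_inner_comm z y, real_inner_comm z z₀]
    ring
  rw [hsplit]
  linarith [hz₀ z hz, pow_pos hv 2]

lemma eventually_dist_add_smul_lt {y z v : E} (hv : 0 < ⟪z - y, v⟫) :
    ∀ᶠ t in 𝓝[>] (0 : ℝ), dist (y + t • v) z < dist y z := by
  have hsmall : ∀ᶠ t in 𝓝[>] (0 : ℝ), t * ‖v‖ ^ 2 < 2 * ⟪z - y, v⟫ := by
    have hlim : Tendsto (fun t : ℝ => t * ‖v‖ ^ 2) (𝓝 0) (𝓝 0) := by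
      simpa using (tendsto_id (x := 𝓝 (0 : ℝ))).mul_const (‖v‖ ^ 2)
    exact nhdsWithin_le_nhds (hlim.eventually_lt_const (by positivity))
  filter_upwards [self_mem_nhdsWithin, hsmall] with t (ht : 0 < t) hts
  have hexpand : dist (y + t • v) z ^ 2 = dist y z ^ 2 - t * (2 * ⟪z - y, v⟫ - t * ‖v‖ ^ 2) := by
    rw [dist_eq_norm, dist_eq_norm, show y + t • v - z = (y - z) + t • v by abel,
      norm_add_sq_real, real_inner_smul_right, norm_smul, Real.norm_of_nonneg ht.le,
      ← neg_sub z y, inner_neg_left]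
    ring
  refine lt_of_pow_lt_pow_left₀ 2 dist_nonneg ?_
  rw [hexpand]
  nlinarith

lemma mem_convexHull_active_of_forall_sup'_le {s : Finset ι} (hs : s.Nonempty) (p : ι → E)
    (c : ι → ℝ) {y : E}
    (hy : ∀ z, s.sup' hs (fun k => dist y (p k) ^ 2 - c k) ≤
      s.sup' hs (fun k => dist z (p k) ^ 2 - c k)) :
    y ∈ convexHull ℝ (p '' {k | k ∈ s ∧
      dist y (p k) ^ 2 - c k = s.sup' hs (fun k => dist y (p k) ^ 2 - c k)}) := by
  set A := {k | k ∈ s ∧ dist y (p k) ^ 2 - c k = s.sup' hs (fun k => dist y (p k) ^ 2 - c k)}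
  by_contra hyA
  have hAfin : A.Finite := s.finite_toSet.subset fun k hk => hk.1
  have hAne : A.Nonempty := by
    obtain ⟨k, hk, hmax⟩ := s.exists_mem_eq_sup' hs fun k => dist y (p k) ^ 2 - c k
    exact ⟨k, hk, hmax.symm⟩
  obtain ⟨v, hv⟩ := exists_inner_sub_pos_of_notMem (convex_convexHull ℝ _)
    ((hAfin.image p).isCompact_convexHull ℝ).isComplete ((hAne.image p).convexHull (𝕜 := ℝ)) hyA
  have hdescent : ∀ k ∈ s, ∀ᶠ t in 𝓝[>] (0 : ℝ),
      dist (y + t • v) (p k) ^ 2 - c k < s.sup' hs (fun k => dist y (p k) ^ 2 - c k) := by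
    intro k hk
    by_cases hkA : k ∈ A
    · filter_upwards [eventually_dist_add_smul_lt (hv _ (subset_convexHull ℝ _ ⟨k, hkA, rfl⟩))]
        with t ht
      rw [← hkA.2]
      gcongr
    · have hlt : dist y (p k) ^ 2 - c k < s.sup' hs (fun k => dist y (p k) ^ 2 - c k) :=
        (Finset.le_sup' (fun k => dist y (p k) ^ 2 - c k) hk).lt_of_ne fun h => hkA ⟨hk, h⟩
      have hcont : Continuous fun t : ℝ => dist (y + t • v) (p k) ^ 2 - c k := by fun_prop
      exact nhdsWithin_le_nhds ((by simpa using hcont.tendsto 0 : Tendsto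
        (fun t : ℝ => dist (y + t • v) (p k) ^ 2 - c k) (𝓝 0) _).eventually_lt_const hlt)
  obtain ⟨t, ht⟩ := ((Filter.eventually_all_finset s).2 hdescent).exists
  exact (hy (y + t • v)).not_gt ((Finset.sup'_lt_iff hs).2 ht)

theorem exists_forall_dist_le_of_dist_le_dist [ProperSpace E] (s : Finset ι) (p : ι → E)
    (q : ι → F) (hpq : ∀ k ∈ s, ∀ m ∈ s, dist (p k) (p m) ≤ dist (q k) (q m)) (x : F) :
    ∃ y, ∀ k ∈ s, dist y (p k) ≤ dist x (q k) := by
  rcases s.eq_empty_or_nonempty with rfl | hs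
  · exact ⟨0, by simp⟩
  set f : E → ℝ := fun y => s.sup' hs fun k => dist y (p k) ^ 2 - dist x (q k) ^ 2
  have hf : Continuous f := Continuous.finset_sup'_apply hs fun k _ => by fun_prop
  have hcoercive : Tendsto f (cocompact E) atTop := by
    obtain ⟨k, hk⟩ := hs
    refine tendsto_atTop_mono
      (fun y => Finset.le_sup' (fun k => dist y (p k) ^ 2 - dist x (q k) ^ 2) hk) ?_
    exact tendsto_atTop_add_const_right _ _
      ((tendsto_pow_atTop two_ne_zero).comp (tendsto_dist_right_cocompact_atTop (p k)))
  obtain ⟨y, hy⟩ := hf.exists_forall_le hcoercive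
  have hfy : f y ≤ 0 := by
    obtain ⟨ι', _, w, z, hw₀, hw₁, hz, hyz⟩ := mem_convexHull_iff_exists_fintype.1
      (mem_convexHull_active_of_forall_sup'_le hs p (fun k => dist x (q k) ^ 2) hy)
    choose k hk hpk using hz
    refine nonpos_of_sum_smul_eq_of_dist_sq_eq_add Finset.univ w (p ∘ k) (q ∘ k) x y (f y)
      (fun m _ => hw₀ m) hw₁ (by simpa [← hpk] using hyz)
      (fun m _ n _ => hpq _ (hk m).1 _ (hk n).1) fun m _ => ?_
    have hactive : dist y (p (k m)) ^ 2 - dist x (q (k m)) ^ 2 = f y := (hk m).2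
    simp only [Function.comp_apply]
    linarith
  refine ⟨y, fun k hk => ?_⟩
  have hle := (Finset.le_sup' (fun k => dist y (p k) ^ 2 - dist x (q k) ^ 2) hk).trans hfy
  exact (pow_le_pow_iff_left₀ dist_nonneg dist_nonneg two_ne_zero).1 (by linarith)

end

theorem no_new_triple_intersections_under_expansion_general
    (D N : ℕ) (p q : Fin N → EuclideanSpace ℝ (Fin D)) (r : Fin N → ℝ)
    (hexp : ∀ i j : Fin N, i < j → dist (p i) (p j) ≤ dist (q i) (q j))
    (i j l : Fin N)
    (h : (closedBall (q i) (r i) ∩ closedBall (q j) (r j) ∩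
      closedBall (q l) (r l)).Nonempty) :
    (closedBall (p i) (r i) ∩ closedBall (p j) (r j) ∩
      closedBall (p l) (r l)).Nonempty := by
  obtain ⟨x, ⟨hxi, hxj⟩, hxl⟩ := h
  have hpq : ∀ k m : Fin N, dist (p k) (p m) ≤ dist (q k) (q m) := by
    intro k m
    rcases lt_trichotomy k m with hkm | rfl | hmk
    · exact hexp k m hkm
    · simp
    · rw [dist_comm, dist_comm (q k)]
      exact hexp m k hmk
  obtain ⟨y, hy⟩ := exists_forall_dist_le_of_dist_le_dist {i, j, l} p q
    (fun k _ m _ => hpq k m) x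
  exact ⟨y, ⟨(hy i (by simp)).trans hxi, (hy j (by simp)).trans hxj⟩, (hy l (by simp)).trans hxl⟩

/-- Under an expansion of the centers no new triple intersections of the balls can appear:
if `q` is an expansion of `p` and some three of the balls around `q` have a common point,
then the corresponding three balls around `p` also have a common point. -/
theorem no_new_triple_intersections_under_expansion
    (D N : ℕ) (p q : Fin N → EuclideanSpace ℝ (Fin D)) (r : Fin N → ℝ)
    (hr : ∀ i, 0 ≤ r i)
    (hexp : ∀ i j : Fin N, i < j → dist (p i) (p j) ≤ dist (q i) (q j))
    (i j l : Fin N)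
    (h : (closedBall (q i) (r i) ∩ closedBall (q j) (r j) ∩
      closedBall (q l) (r l)).Nonempty) :
    (closedBall (p i) (r i) ∩ closedBall (p j) (r j) ∩
      closedBall (p l) (r l)).Nonempty :=
  no_new_triple_intersections_under_expansion_general D N p q r hexp i j l h
end

section
/- Let p = (p_1, …, p_N) and q = (q_1, …, q_N) be configurations of N points in E^d such that q is an expansion of p. Then, regarding E^{2d} as E^d × E^d, there exists a smooth (infinitely differentiable) motion P(t) = (P_1(t), …, P_N(t)), t ∈ [0, 1], of N points in E^{2d} such that P_i(0) = (p_i, 0) for all i, P_i(1) = (0, q_i) for all i, and for every pair i ≠ j the distance |P_i(t) − P_j(t)| is a non-decreasing function of t on [0, 1]. -/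
open Metric

private lemma norm_sq_split (d : ℕ) (v : EuclideanSpace ℝ (Fin d ⊕ Fin d))
    (x y : EuclideanSpace ℝ (Fin d))
    (hx : ∀ k, v (Sum.inl k) = x k) (hy : ∀ k, v (Sum.inr k) = y k) :
    ‖v‖ ^ 2 = ‖x‖ ^ 2 + ‖y‖ ^ 2 := by
  rw [EuclideanSpace.norm_eq v, EuclideanSpace.norm_eq x, EuclideanSpace.norm_eq y,
    Real.sq_sqrt (by positivity), Real.sq_sqrt (by positivity),
    Real.sq_sqrt (by positivity), Fintype.sum_sum_type]
  simp [hx, hy]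

/-- If `q` is an expansion of `p` in `E^d`, then, regarding `E^{2d}` as `E^d × E^d`
(formalized as `EuclideanSpace ℝ (Fin d ⊕ Fin d)`), there is a smooth motion
`P(t)`, `t ∈ [0,1]`, of `N` points in `E^{2d}` with `P_i(0) = (p_i, 0)`, `P_i(1) = (0, q_i)`,
along which all pairwise distances are non-decreasing. -/
theorem smooth_expanding_motion_in_double_dimension
    (d N : ℕ) (p q : Fin N → EuclideanSpace ℝ (Fin d))
    (hexp : ∀ i j : Fin N, i < j → dist (p i) (p j) ≤ dist (q i) (q j)) :
    ∃ P : ℝ → Fin N → EuclideanSpace ℝ (Fin d ⊕ Fin d),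
      (∀ i, ContDiffOn ℝ (⊤ : ℕ∞) (fun t => P t i) (Set.Icc 0 1)) ∧
      (∀ i, P 0 i = (Sum.elim (p i) (fun _ => 0) : Fin d ⊕ Fin d → ℝ)) ∧
      (∀ i, P 1 i = (Sum.elim (fun _ => 0) (q i) : Fin d ⊕ Fin d → ℝ)) ∧
      (∀ i j : Fin N, i ≠ j →
        MonotoneOn (fun t => dist (P t i) (P t j)) (Set.Icc 0 1)) := by
  set c : ℝ → ℝ := fun t => Real.cos (Real.pi / 2 * t) with hc
  set s : ℝ → ℝ := fun t => Real.sin (Real.pi / 2 * t) with hs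
  set A : Fin N → EuclideanSpace ℝ (Fin d ⊕ Fin d) :=
    fun i => (WithLp.toLp 2 (Sum.elim (p i) (fun _ => 0) : Fin d ⊕ Fin d → ℝ) : EuclideanSpace ℝ (Fin d ⊕ Fin d)) with hA
  set B : Fin N → EuclideanSpace ℝ (Fin d ⊕ Fin d) :=
    fun i => (WithLp.toLp 2 (Sum.elim (fun _ => 0) (q i) : Fin d ⊕ Fin d → ℝ) : EuclideanSpace ℝ (Fin d ⊕ Fin d)) with hB
  refine ⟨fun t i => c t • A i + s t • B i, ?_, ?_, ?_, ?_⟩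
  · intro i
    have hcc : ContDiff ℝ (⊤ : ℕ∞) c := Real.contDiff_cos.comp (contDiff_const.mul contDiff_id)
    have hss : ContDiff ℝ (⊤ : ℕ∞) s := Real.contDiff_sin.comp (contDiff_const.mul contDiff_id)
    exact ((hcc.smul contDiff_const).add (hss.smul contDiff_const)).contDiffOn
  · intro i
    simp [hc, hs, hA, hB]
  · intro i
    simp [hc, hs, hA, hB]
  · intro i j hij
    set dp : ℝ := dist (p i) (p j) with hdp
    set dq : ℝ := dist (q i) (q j) with hdq
    have hdistsq : ∀ t : ℝ, (dist (c t • A i + s t • B i) (c t • A j + s t • B j)) ^ 2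
        = dp ^ 2 + (s t) ^ 2 * (dq ^ 2 - dp ^ 2) := by
      intro t
      rw [dist_eq_norm]
      rw [norm_sq_split d _ (c t • (p i - p j)) (s t • (q i - q j))
        (by intro k; simp [hA, hB, mul_sub])
        (by intro k; simp [hA, hB, mul_sub])]
      have hpyth : Real.cos (Real.pi / 2 * t) ^ 2 = 1 - Real.sin (Real.pi / 2 * t) ^ 2 := by
        have := Real.sin_sq_add_cos_sq (Real.pi / 2 * t); linarith
      have h1 : ‖p i - p j‖ = dp := by rw [hdp, dist_eq_norm]
      have h2 : ‖q i - q j‖ = dq := by rw [hdq, dist_eq_norm]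
      rw [norm_smul, norm_smul, mul_pow, mul_pow, Real.norm_eq_abs, Real.norm_eq_abs,
        sq_abs, sq_abs, h1, h2, hc, hs]
      simp only []
      rw [hpyth]; ring
    have hdpq : dp ≤ dq := by
      rcases lt_or_gt_of_ne hij with h | h
      · exact hexp i j h
      · have := hexp j i h
        rwa [dist_comm (p j), dist_comm (q j)] at this
    intro a ha b hb hab
    simp only []
    have hsab : s a ≤ s b := by
      apply Real.strictMonoOn_sin.monotoneOn
      · constructor
        · nlinarith [Real.pi_pos, ha.1]
        · nlinarith [Real.pi_pos, ha.2]
      · constructor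
        · nlinarith [Real.pi_pos, hb.1]
        · nlinarith [Real.pi_pos, hb.2]
      · nlinarith [Real.pi_pos]
    have hsa0 : 0 ≤ s a := by
      apply Real.sin_nonneg_of_nonneg_of_le_pi
      · nlinarith [Real.pi_pos, ha.1]
      · nlinarith [Real.pi_pos, ha.2]
    have hkey : (dist (c a • A i + s a • B i) (c a • A j + s a • B j)) ^ 2
        ≤ (dist (c b • A i + s b • B i) (c b • A j + s b • B j)) ^ 2 := by
      rw [hdistsq a, hdistsq b]
      have hsq : s a ^ 2 ≤ s b ^ 2 := by nlinarith
      have hdp0 : (0:ℝ) ≤ dp := dist_nonneg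
      have h0 : (0:ℝ) ≤ dq ^ 2 - dp ^ 2 := by nlinarith
      nlinarith [mul_nonneg (sub_nonneg.2 hsq) h0]
    have hd1 : (0:ℝ) ≤ dist (c a • A i + s a • B i) (c a • A j + s a • B j) := dist_nonneg
    have hd2 : (0:ℝ) ≤ dist (c b • A i + s b • B i) (c b • A j + s b • B j) := dist_nonneg
    exact (pow_le_pow_iff_left₀ hd1 hd2 two_ne_zero).mp hkey
end
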